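/- arXiv:1507.02316 — 7 statements merged into one kernel-verified Lean document; each statement's English description precedes it below -/
import Mathlib

section
/- For any positive integers k_1,...,k_n, the set of points of the form (k_1 r_1, ..., k_n r_n) / (k_1 r_1 + ... + k_n r_n), where r_1,...,r_n range over the positive integers, is dense in the standard simplex {x ∈ ℝ^n : x_i ≥ 0, Σ x_i = 1}. -/
open Filter Topology

/-! Choose `r_i = ⌊N x_i / k_i⌋ + 1`, so that `k_i r_i` lies within `k_i` of `N x_i`. Dividing by `N`
these vectors tend to `x`, and the normalisation `y ↦ y / ∑ y` is continuous at `x` (where `∑ x = 1`)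
and insensitive to the factor `1 / N`. -/

lemma exists_pos_nat_abs_mul_sub_le {t : ℝ} (ht : 0 ≤ t) {k : ℕ} (hk : 0 < k) :
    ∃ m : ℕ, 0 < m ∧ |(k * m : ℝ) - t| ≤ k := by
  have hk' : (0 : ℝ) < k := by exact_mod_cast hk
  refine ⟨⌊t / k⌋₊ + 1, Nat.succ_pos _, abs_sub_le_iff.mpr ⟨?_, ?_⟩⟩
  · have := Nat.floor_le (div_nonneg ht hk'.le)
    push_cast
    rw [le_div_iff₀ hk'] at this
    nlinarith
  · have := Nat.lt_floor_add_one (t / k)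
    push_cast
    rw [div_lt_iff₀ hk'] at this
    linarith

lemma tendsto_div_natCast_of_abs_sub_le {a : ℕ → ℝ} {x C : ℝ} (h : ∀ N, |a N - N * x| ≤ C) :
    Tendsto (fun N : ℕ => a N / N) atTop (𝓝 x) := by
  have herr : Tendsto (fun N : ℕ => (a N - N * x) / N) atTop (𝓝 0) := by
    refine squeeze_zero_norm (fun N => ?_)
      ((tendsto_const_nhds (x := C)).div_atTop tendsto_natCast_atTop_atTop)
    rw [norm_div, Real.norm_natCast]
    exact div_le_div_of_nonneg_right (h N) N.cast_nonneg
  refine (by simpa using herr.const_add x : Tendsto _ _ _).congr' ?_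
  filter_upwards [eventually_ne_atTop 0] with N hN
  field_simp
  ring

section normalizeSum

variable {ι : Type*} [Fintype ι]

noncomputable def normalizeSum (y : ι → ℝ) : ι → ℝ := fun i => y i / ∑ j, y j

lemma normalizeSum_div_const (y : ι → ℝ) {c : ℝ} (hc : c ≠ 0) :
    normalizeSum (fun i => y i / c) = normalizeSum y := by
  funext i
  simp only [normalizeSum]
  rw [← Finset.sum_div]
  by_cases hy : ∑ j, y j = 0
  · simp [hy]
  · field_simp

lemma normalizeSum_of_sum_eq_one {x : ι → ℝ} (hx : ∑ i, x i = 1) : normalizeSum x = x := by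
  funext i
  simp [normalizeSum, hx]

lemma continuousAt_normalizeSum {x : ι → ℝ} (hx : ∑ i, x i ≠ 0) :
    ContinuousAt normalizeSum x :=
  continuousAt_pi.mpr fun i =>
    (continuous_apply i).continuousAt.div (continuous_finsetSum _ fun j _ =>
      continuous_apply j).continuousAt hx

end normalizeSum

theorem dense_rational_directions_general (n : ℕ) (k : Fin n → ℕ)
    (hk : ∀ i, 0 < k i) :
    {x : Fin n → ℝ | (∀ i, 0 ≤ x i) ∧ ∑ i, x i = 1} ⊆
      closure {x : Fin n → ℝ | ∃ r : Fin n → ℕ, (∀ i, 0 < r i) ∧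
        x = fun i => (k i * r i : ℝ) / ∑ j, (k j * r j : ℝ)} := by
  rintro x ⟨hx0, hx1⟩
  choose r hr_pos hr_near using fun (N : ℕ) i =>
    exists_pos_nat_abs_mul_sub_le (mul_nonneg N.cast_nonneg (hx0 i)) (hk i)
  have hscaled : Tendsto (fun N : ℕ => fun i => (k i * r N i : ℝ) / N) atTop (𝓝 x) :=
    tendsto_pi_nhds.mpr fun i => tendsto_div_natCast_of_abs_sub_le fun N => hr_near N i
  have hnormalized := (continuousAt_normalizeSum (hx1.symm ▸ one_ne_zero)).tendsto.comp hscaled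
  rw [normalizeSum_of_sum_eq_one hx1] at hnormalized
  refine mem_closure_of_tendsto hnormalized ?_
  filter_upwards [eventually_ne_atTop 0] with N hN
  exact ⟨r N, hr_pos N,
    normalizeSum_div_const (fun i => (k i * r N i : ℝ)) (Nat.cast_ne_zero.mpr hN)⟩

theorem dense_rational_directions (n : ℕ) (hn : 0 < n) (k : Fin n → ℕ)
    (hk : ∀ i, 0 < k i) :
    {x : Fin n → ℝ | (∀ i, 0 ≤ x i) ∧ ∑ i, x i = 1} ⊆
      closure {x : Fin n → ℝ | ∃ r : Fin n → ℕ, (∀ i, 0 < r i) ∧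
        x = fun i => (k i * r i : ℝ) / ∑ j, (k j * r j : ℝ)} :=
  dense_rational_directions_general n k hk
end

section
/- Given nonnegative real numbers b_1,...,b_n with Σ_{i=1}^n b_i = 1/n^{n-1}, there exist strictly positive real numbers t_1,...,t_n with Σ t_i = 1 such that t_1^{t_1} ⋯ t_n^{t_n} ≥ b_i^{t_i} for every i = 1,...,n. -/
/-!
Replacing each `b i` by `q i ^ n`, where `q` is a probability vector with `b i ≤ q i ^ n`
(AM–GM), it suffices to treat `b i = q i ^ n`. Taking `t i` proportional to `1 / log (q i)` makes
all the `q i ^ t i` equal, so `(q i ^ n) ^ t i = ∏ j, q j ^ t j`, which Gibbs' inequality bounds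
by `∏ j, t j ^ t j`.
-/

open Real Finset

variable {ι : Type*} [Fintype ι]

theorem Real.prod_rpow_le_prod_rpow_self {w q : ι → ℝ} (hw : ∀ i, 0 < w i)
    (hw1 : ∑ i, w i = 1) (hq : ∀ i, 0 ≤ q i) (hq1 : ∑ i, q i ≤ 1) :
    ∏ i, q i ^ w i ≤ ∏ i, w i ^ w i := by
  have hamgm : ∏ i, (q i / w i) ^ w i ≤ 1 := calc
    _ ≤ ∑ i, w i * (q i / w i) := geom_mean_le_arith_mean_weighted _ _ _
          (fun i _ => (hw i).le) hw1 (fun i _ => div_nonneg (hq i) (hw i).le)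
    _ = ∑ i, q i := sum_congr rfl fun i _ => mul_div_cancel₀ _ (hw i).ne'
    _ ≤ 1 := hq1
  simp only [div_rpow (hq _) (hw _).le, prod_div_distrib] at hamgm
  exact (div_le_one (prod_pos fun i _ => rpow_pos_of_pos (hw i) _)).mp hamgm

theorem exists_weights_rpow_eq [Nonempty ι] {q : ι → ℝ} (hq0 : ∀ i, 0 < q i)
    (hq1 : ∀ i, q i < 1) :
    ∃ t : ι → ℝ, (∀ i, 0 < t i) ∧ ∑ i, t i = 1 ∧ ∀ i j, q i ^ t i = q j ^ t j := by
  have hlog : ∀ i, log (q i) < 0 := fun i => log_neg (hq0 i) (hq1 i)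
  set S := ∑ i, (log (q i))⁻¹
  have hS : S < 0 := sum_neg (fun i _ => inv_lt_zero.mpr (hlog i)) univ_nonempty
  have hexp : ∀ i, q i ^ ((log (q i))⁻¹ / S) = exp S⁻¹ := fun i => by
    rw [rpow_def_of_pos (hq0 i), mul_div_assoc', mul_inv_cancel₀ (hlog i).ne, one_div]
  refine ⟨fun i => (log (q i))⁻¹ / S,
    fun i => div_pos_of_neg_of_neg (inv_lt_zero.mpr (hlog i)) hS, ?_,
    fun i j => (hexp i).trans (hexp j).symm⟩
  rw [← sum_div, div_self hS.ne]

theorem exists_weights_pow_card_rpow_le [Nonempty ι] {q : ι → ℝ} (hq0 : ∀ i, 0 < q i)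
    (hq1 : ∀ i, q i < 1) (hsum : ∑ i, q i ≤ 1) :
    ∃ t : ι → ℝ, (∀ i, 0 < t i) ∧ ∑ i, t i = 1 ∧
      ∀ i, (q i ^ Fintype.card ι) ^ t i ≤ ∏ j, t j ^ t j := by
  obtain ⟨t, ht0, ht1, heq⟩ := exists_weights_rpow_eq hq0 hq1
  refine ⟨t, ht0, ht1, fun i => ?_⟩
  calc (q i ^ Fintype.card ι) ^ t i = ∏ j, q j ^ t j := by
        rw [← rpow_natCast_mul (hq0 i).le, mul_comm, rpow_mul_natCast (hq0 i).le,
          ← card_univ, ← prod_const]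
        exact prod_congr rfl fun j _ => heq i j
    _ ≤ ∏ j, t j ^ t j := prod_rpow_le_prod_rpow_self ht0 ht1 (fun j => (hq0 j).le) hsum

theorem le_add_sub_one_div_pow {a : ℝ} (ha : 0 ≤ a) {n : ℕ} (hn : 0 < n) :
    a ≤ ((a + n - 1) / n) ^ n := by
  have hn' : (1 : ℝ) ≤ n := by exact_mod_cast hn
  have h := one_add_mul_le_pow (a := (a - 1) / n)
    (by rw [le_div_iff₀ (by linarith)]; nlinarith) n
  have e1 : 1 + n * ((a - 1) / n) = a := by field_simp; ring
  have e2 : 1 + (a - 1) / n = (a + n - 1) / n := by field_simp; ring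
  rwa [e1, e2] at h

theorem lt_one_of_sum_eq_one {q : ι → ℝ} (hq : ∀ i, 0 < q i) (hsum : ∑ i, q i = 1)
    (hcard : 1 < Fintype.card ι) (i : ι) : q i < 1 := by
  obtain ⟨j, hj⟩ := Fintype.exists_ne_of_one_lt_card hcard i
  exact hsum ▸ single_lt_sum hj (mem_univ i) (mem_univ j) (hq j) fun k _ _ => (hq k).le

theorem exists_sum_eq_one_le_pow_card {b : ι → ℝ} (hb : ∀ i, 0 ≤ b i)
    (hcard : 1 < Fintype.card ι)
    (hsum : ∑ i, b i = 1 / (Fintype.card ι : ℝ) ^ (Fintype.card ι - 1)) :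
    ∃ q : ι → ℝ, (∀ i, 0 < q i) ∧ ∑ i, q i = 1 ∧ ∀ i, b i ≤ q i ^ Fintype.card ι := by
  set n := Fintype.card ι
  have hn : (1 : ℝ) < n := by exact_mod_cast hcard
  have hpow : (n : ℝ) ^ n = n * n ^ (n - 1) := by rw [← pow_succ', Nat.sub_add_cancel hcard.le]
  -- the tangent line of `x ↦ x ^ (1 / n)` at the mean `n ^ (-n)` of `b`, evaluated at `b i`
  refine ⟨fun i => (n ^ n * b i + n - 1) / n ^ 2, fun i => ?_, ?_, fun i => ?_⟩
  · have := hb i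
    apply div_pos _ (by positivity)
    nlinarith [pow_pos (by linarith : (0 : ℝ) < n) n]
  · rw [← sum_div, sum_sub_distrib, sum_add_distrib, ← mul_sum, hsum, hpow]
    simp only [sum_const, card_univ, nsmul_eq_mul, mul_one]
    field_simp
    ring
  · calc b i = n ^ n * b i / n ^ n := by field_simp
      _ ≤ ((n ^ n * b i + n - 1) / n) ^ n / n ^ n := by
        gcongr
        exact le_add_sub_one_div_pow (by have := hb i; positivity) (by omega)
      _ = ((n ^ n * b i + n - 1) / n ^ 2) ^ n := by
        rw [← div_pow, div_div, sq]

open Real in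
theorem exists_weights_plank (n : ℕ) (hn : 0 < n) (b : Fin n → ℝ)
    (hb : ∀ i, 0 ≤ b i) (hsum : ∑ i, b i = 1 / (n : ℝ) ^ (n - 1)) :
    ∃ t : Fin n → ℝ, (∀ i, 0 < t i) ∧ ∑ i, t i = 1 ∧
      ∀ i, b i ^ (t i) ≤ ∏ j, (t j) ^ (t j) := by
  obtain rfl | hn1 : n = 1 ∨ 1 < n := by omega
  · refine ⟨fun _ => 1, fun _ => one_pos, by simp, fun i => ?_⟩
    have hbi : b i = 1 := by simpa [Subsingleton.elim i 0] using hsum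
    simp [hbi]
  have : Nonempty (Fin n) := ⟨⟨0, hn⟩⟩
  obtain ⟨q, hq0, hq1, hbq⟩ :=
    exists_sum_eq_one_le_pow_card hb (by rwa [Fintype.card_fin]) (by rwa [Fintype.card_fin])
  obtain ⟨t, ht0, ht1, hqt⟩ := exists_weights_pow_card_rpow_le hq0
    (lt_one_of_sum_eq_one hq0 hq1 (by rwa [Fintype.card_fin])) hq1.le
  refine ⟨t, ht0, ht1, fun i => (rpow_le_rpow (hb i) (hbq i) (ht0 i).le).trans ?_⟩
  simpa using hqt i
end

section
/- Let n be a positive integer and K ∈ (0, 1/(n e^2)^{1/n}]. Given nonnegative real numbers b_1,...,b_n with Σ_{i=1}^n b_i = n K^n, there exist strictly positive real numbers t_1,...,t_n with Σ t_i = 1 such that K^{1/t_i} ≥ b_i for every i = 1,...,n. -/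
/-!
With `s i = log K / log (b i)`, the condition `b i ≤ K ^ (1 / t i)` says exactly `s i ≤ t i`
(all `b i` lie in `[0, exp (-2)]`, and `s i = 0` when `b i = 0`). So it suffices that
`∑ s i ≤ 1`, strictly if some `b i` vanishes; the slack is then spread evenly over all `t i`.
The function `b ↦ (log b)⁻¹` is convex on `[0, exp (-2)]`, so by Jensen at the mean `a = K ^ n`
of the `b i`, `∑ (log (b i))⁻¹ ≥ n / log a = 1 / log K`, which is `∑ s i ≤ 1`. Only the tangent
line at `a` is needed; it lies strictly below the function at `b = 0`, and after the substitution
`b = exp (-u)`, `a = exp (-v)` it becomes an elementary inequality for `u, v ≥ 2`.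
-/

open Real Finset

lemma two_sub_le_two_add_mul_exp_neg {s : ℝ} (hs : 0 ≤ s) : 2 - s ≤ (2 + s) * exp (-s) := by
  have hderiv : ∀ x : ℝ, HasDerivAt (fun x => (2 + x) * exp (-x) - (2 - x))
      (1 - (1 + x) * exp (-x)) x := by
    intro x
    have := (((hasDerivAt_id' x).const_add 2).fun_mul (hasDerivAt_neg' x).exp).fun_sub
      ((hasDerivAt_id' x).const_sub 2)
    exact this.congr_deriv (by ring)
  have hmono := monotone_of_hasDerivAt_nonneg hderiv fun x => by
    have := mul_le_mul_of_nonneg_right (add_one_le_exp x) (exp_pos (-x)).le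
    rw [← exp_add, add_neg_cancel, exp_zero, add_comm] at this
    simpa using this
  simpa using hmono hs

lemma mul_sub_le_mul_exp_sub_sub_one {u v : ℝ} (hu : 2 ≤ u) (hv : 2 ≤ v) :
    v * (v - u) ≤ u * (exp (v - u) - 1) := by
  rcases le_total u v with huv | hvu
  · have := quadratic_le_exp_of_nonneg (sub_nonneg.2 huv)
    nlinarith [mul_nonneg (sub_nonneg.2 hu) (sq_nonneg (v - u))]
  · have h2 := two_sub_le_two_add_mul_exp_neg (sub_nonneg.2 hvu)
    have h1 := add_one_le_exp (-(u - v))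
    rw [neg_sub] at h1 h2
    nlinarith [mul_nonneg (sub_nonneg.2 hv) (by linarith : 0 ≤ (u - v) - 1 + exp (v - u))]

lemma inv_log_tangent_at_zero_neg {a : ℝ} (ha0 : 0 < a) (ha : a ≤ exp (-2)) :
    (log a)⁻¹ - (0 - a) / (a * log a ^ 2) < 0 := by
  have hlog : log a ≤ -2 := by simpa using log_le_log ha0 ha
  have : (log a)⁻¹ - (0 - a) / (a * log a ^ 2) = (log a + 1) / log a ^ 2 := by
    field_simp
    ring
  rw [this]
  exact div_neg_of_neg_of_pos (by linarith) (by nlinarith)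

/-- The tangent line at `a` of the function `b ↦ (log b)⁻¹`, which is convex on `[0, exp (-2)]`. -/
lemma inv_log_tangent_le {a b : ℝ} (ha0 : 0 < a) (ha : a ≤ exp (-2)) (hb0 : 0 ≤ b)
    (hb : b ≤ exp (-2)) : (log a)⁻¹ - (b - a) / (a * log a ^ 2) ≤ (log b)⁻¹ := by
  rcases hb0.eq_or_lt with rfl | hb0
  · simpa using (inv_log_tangent_at_zero_neg ha0 ha).le
  obtain ⟨u, rfl⟩ : ∃ u, b = exp (-u) := ⟨-log b, by rw [neg_neg, exp_log hb0]⟩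
  obtain ⟨v, rfl⟩ : ∃ v, a = exp (-v) := ⟨-log a, by rw [neg_neg, exp_log ha0]⟩
  have hu : 2 ≤ u := by simpa using hb
  have hv : 2 ≤ v := by simpa using ha
  have hexp : (exp (-u) - exp (-v)) / exp (-v) = exp (v - u) - 1 := by
    rw [sub_div, div_self (exp_pos _).ne', ← exp_sub, neg_sub_neg]
  have key := mul_sub_le_mul_exp_sub_sub_one hu hv
  rw [log_exp, log_exp, neg_sq, ← div_div, hexp, sub_nonneg.symm]
  have : (-u)⁻¹ - ((-v)⁻¹ - (exp (v - u) - 1) / v ^ 2) =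
      (u * (exp (v - u) - 1) - v * (v - u)) / (u * v ^ 2) := by
    field_simp
    ring
  rw [this]
  exact div_nonneg (by linarith) (by positivity)

section TangentLine

variable {ι : Type*} [Fintype ι] {a : ℝ} {b : ι → ℝ}

lemma sum_inv_log_tangent (hsum : ∑ i, b i = Fintype.card ι * a) :
    ∑ i, ((log a)⁻¹ - (b i - a) / (a * log a ^ 2)) = Fintype.card ι * (log a)⁻¹ := by
  rw [sum_sub_distrib, ← sum_div, sum_sub_distrib, hsum, sum_const, sum_const, card_univ,
    nsmul_eq_mul, nsmul_eq_mul, sub_self, zero_div, sub_zero]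

lemma card_mul_inv_log_le_sum_inv_log (ha0 : 0 < a) (ha : a ≤ exp (-2))
    (hb0 : ∀ i, 0 ≤ b i) (hb : ∀ i, b i ≤ exp (-2)) (hsum : ∑ i, b i = Fintype.card ι * a) :
    Fintype.card ι * (log a)⁻¹ ≤ ∑ i, (log (b i))⁻¹ :=
  sum_inv_log_tangent hsum ▸ sum_le_sum fun i _ => inv_log_tangent_le ha0 ha (hb0 i) (hb i)

lemma card_mul_inv_log_lt_sum_inv_log (ha0 : 0 < a) (ha : a ≤ exp (-2))
    (hb0 : ∀ i, 0 ≤ b i) (hb : ∀ i, b i ≤ exp (-2)) (hsum : ∑ i, b i = Fintype.card ι * a)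
    {j : ι} (hj : b j = 0) : Fintype.card ι * (log a)⁻¹ < ∑ i, (log (b i))⁻¹ :=
  sum_inv_log_tangent hsum ▸ sum_lt_sum (fun i _ => inv_log_tangent_le ha0 ha (hb0 i) (hb i))
    ⟨j, mem_univ j, by simpa [hj] using inv_log_tangent_at_zero_neg ha0 ha⟩

end TangentLine

lemma sum_log_div_log_le_one {ι : Type*} [Fintype ι] {K : ℝ} {b : ι → ℝ} (hK0 : 0 < K)
    (hKn : K ^ Fintype.card ι ≤ exp (-2)) (hb0 : ∀ i, 0 ≤ b i) (hb : ∀ i, b i ≤ exp (-2))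
    (hsum : ∑ i, b i = Fintype.card ι * K ^ Fintype.card ι) :
    ∑ i, log K / log (b i) ≤ 1 ∧
      ((∀ i, 0 < log K / log (b i)) ∨ ∑ i, log K / log (b i) < 1) := by
  have hlogA : Fintype.card ι * log K ≤ -2 := by
    simpa [log_pow] using log_le_log (by positivity) hKn
  have hlogK : log K < 0 := by
    nlinarith [(Fintype.card ι).cast_nonneg (α := ℝ)]
  -- `log K = log (K ^ n) / n`, so Jensen's bound at the mean `K ^ n` is exactly the bound `1`
  have hone : log K * (Fintype.card ι * (log (K ^ Fintype.card ι))⁻¹) = 1 := by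
    rw [log_pow, ← mul_assoc, mul_comm (log K), mul_inv_cancel₀ (hlogA.trans_lt (by norm_num)).ne]
  have hsum_eq : ∑ i, log K / log (b i) = log K * ∑ i, (log (b i))⁻¹ := by
    simp only [div_eq_mul_inv, mul_sum]
  rw [hsum_eq]
  refine ⟨hone ▸ mul_le_mul_of_nonpos_left
    (card_mul_inv_log_le_sum_inv_log (by positivity) hKn hb0 hb hsum) hlogK.le, ?_⟩
  by_cases h0 : ∃ i, b i = 0
  · obtain ⟨j, hj⟩ := h0
    exact .inr (hone ▸ mul_lt_mul_of_neg_left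
      (card_mul_inv_log_lt_sum_inv_log (by positivity) hKn hb0 hb hsum hj) hlogK)
  · push Not at h0
    refine .inl fun i => div_pos_of_neg_of_neg hlogK (log_neg ((hb0 i).lt_of_ne' (h0 i)) ?_)
    exact (hb i).trans_lt (exp_lt_one_iff.2 (by norm_num))

lemma exists_pos_sum_eq_one_of_le {ι : Type*} [Fintype ι] [Nonempty ι] {s : ι → ℝ}
    (hs : ∀ i, 0 ≤ s i) (hsum : ∑ i, s i ≤ 1) (hpos : (∀ i, 0 < s i) ∨ ∑ i, s i < 1) :
    ∃ t : ι → ℝ, (∀ i, 0 < t i) ∧ ∑ i, t i = 1 ∧ ∀ i, s i ≤ t i := by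
  have hcard : (0 : ℝ) < Fintype.card ι := Nat.cast_pos.2 Fintype.card_pos
  have hslack : 0 ≤ (1 - ∑ i, s i) / Fintype.card ι := div_nonneg (sub_nonneg.2 hsum) hcard.le
  refine ⟨fun i => s i + (1 - ∑ i, s i) / Fintype.card ι, fun i => ?_, ?_,
    fun i => le_add_of_nonneg_right hslack⟩
  · rcases hpos with hpos | hlt
    · exact add_pos_of_pos_of_nonneg (hpos i) hslack
    · exact add_pos_of_nonneg_of_pos (hs i) (div_pos (sub_pos.2 hlt) hcard)
  · rw [sum_add_distrib, sum_const, card_univ, nsmul_eq_mul, mul_div_cancel₀ _ hcard.ne']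
    ring

lemma le_rpow_one_div_of_log_div_log_le {K b t : ℝ} (hK : 0 < K) (hb0 : 0 ≤ b) (hb1 : b < 1)
    (ht : 0 < t) (h : log K / log b ≤ t) : b ≤ K ^ (1 / t) := by
  rcases hb0.eq_or_lt with rfl | hb0
  · positivity
  rw [← log_le_log_iff hb0 (by positivity), log_rpow hK, one_div, inv_mul_eq_div, le_div_iff₀ ht]
  exact mul_comm t (log b) ▸ (div_le_iff_of_neg (log_neg hb0 hb1)).1 h

lemma natCast_mul_pow_le_exp_neg_two {n : ℕ} {K : ℝ} (hn : 0 < n) (hK0 : 0 < K)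
    (hK : K ≤ 1 / (n * exp 2) ^ ((1 : ℝ) / n)) : n * K ^ n ≤ exp (-2) := by
  have hn' : (0 : ℝ) < n := Nat.cast_pos.2 hn
  rw [one_div, ← inv_rpow (by positivity), one_div,
    le_rpow_inv_iff_of_pos hK0.le (by positivity) hn', rpow_natCast] at hK
  have := mul_le_mul_of_nonneg_left hK hn'.le
  rwa [mul_inv, ← mul_assoc, mul_inv_cancel₀ hn'.ne', one_mul, ← exp_neg] at this

open Real in
theorem exists_weights_plank_constant (n : ℕ) (hn : 0 < n) (K : ℝ)
    (hK0 : 0 < K) (hK : K ≤ 1 / ((n * Real.exp 2) ^ ((1 : ℝ) / n)))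
    (b : Fin n → ℝ) (hb : ∀ i, 0 ≤ b i)
    (hsum : ∑ i, b i = n * K ^ n) :
    ∃ t : Fin n → ℝ, (∀ i, 0 < t i) ∧ ∑ i, t i = 1 ∧
      ∀ i, b i ≤ K ^ (1 / t i) := by
  have hnKn := natCast_mul_pow_le_exp_neg_two hn hK0 hK
  have hKn : K ^ n ≤ exp (-2) :=
    (le_mul_of_one_le_left (by positivity) (Nat.one_le_cast.2 hn)).trans hnKn
  have hb_le (i : Fin n) : b i ≤ exp (-2) :=
    (hsum ▸ single_le_sum (fun j _ => hb j) (mem_univ i)).trans hnKn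
  have hexp : exp (-2) < 1 := exp_lt_one_iff.2 (by norm_num)
  have hb1 (i : Fin n) : b i < 1 := (hb_le i).trans_lt hexp
  have hK1 : K < 1 := (pow_lt_one_iff_of_nonneg hK0.le hn.ne').1 (hKn.trans_lt hexp)
  obtain ⟨hle, hpos⟩ := sum_log_div_log_le_one (b := b) hK0 (by simpa using hKn) hb hb_le
    (by simpa using hsum)
  have : Nonempty (Fin n) := ⟨⟨0, hn⟩⟩
  obtain ⟨t, ht0, ht1, hst⟩ := exists_pos_sum_eq_one_of_le
    (fun i => div_nonneg_of_nonpos (log_neg hK0 hK1).le (log_nonpos (hb i) (hb1 i).le)) hle hpos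
  exact ⟨t, ht0, ht1, fun i => le_rpow_one_div_of_log_div_log_le hK0 (hb i) (hb1 i) (ht0 i) (hst i)⟩
end

section
/- Let a_1,...,a_n be positive real numbers such that each a_i ≤ 1/e^2. Then with c > 0 determined by the equation Π_{i=1}^n (c a_i)^{c a_i} = e^{-c}, one has c ≤ ln n; more concretely (the key inequality used): (-1 - Σ_{i=1}^n a_i ln a_i) / (Σ_{i=1}^n a_i) ≤ ln(ln n), provided Σ_{i=1}^n a_i ≤ 1/ln n and n ≥ 3. -/
open Real Finset

lemma g_mono {s t : ℝ} (hs : 0 < s) (hst : s ≤ t) (ht1 : t ≤ 1) :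
    -1/s - Real.log s ≤ -1/t - Real.log t := by
  have ht : 0 < t := lt_of_lt_of_le hs hst
  have h1 : Real.log (t/s) ≤ t/s - 1 := Real.log_le_sub_one_of_pos (by positivity)
  rw [Real.log_div (ne_of_gt ht) (ne_of_gt hs)] at h1
  have h2 : t/s - 1 ≤ 1/s - 1/t := by
    rw [div_sub_one (ne_of_gt hs), div_sub_div _ _ (ne_of_gt hs) (ne_of_gt ht)]
    rw [div_le_div_iff₀ hs (by positivity)]
    nlinarith [mul_nonneg (mul_nonneg (sub_nonneg.2 hst) hs.le) (sub_nonneg.2 ht1)]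
  have e1 : -1/s = -(1/s) := by ring
  have e2 : -1/t = -(1/t) := by ring
  rw [e1, e2]; linarith

theorem key_log_inequality (n : ℕ) (hn : 3 ≤ n) (a : Fin n → ℝ)
    (ha : ∀ i, 0 < a i) (hale : ∀ i, a i ≤ 1 / Real.exp 1 ^ 2)
    (hsum : ∑ i, a i ≤ 1 / Real.log n) :
    (-1 - ∑ i, a i * Real.log (a i)) / (∑ i, a i) ≤ Real.log (Real.log n) := by
  set S := ∑ i, a i with hSdef
  have hnpos : (0:ℝ) < n := by positivity
  have hne : Nonempty (Fin n) := ⟨⟨0, by omega⟩⟩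
  have hS : 0 < S := Finset.sum_pos (fun i _ => ha i) Finset.univ_nonempty
  have hlogn : 1 < Real.log n := by
    rw [Real.lt_log_iff_exp_lt hnpos]
    calc Real.exp 1 < 2.7182818286 := Real.exp_one_lt_d9
    _ ≤ n := by
      have : (3:ℝ) ≤ n := by exact_mod_cast hn
      linarith
  have hlognpos : 0 < Real.log n := by linarith
  -- Jensen
  have hjensen : S * (Real.log S - Real.log n) ≤ ∑ i, a i * Real.log (a i) := by
    have key := Real.convexOn_mul_log.map_sum_le (t := Finset.univ) (w := fun _ : Fin n => (n:ℝ)⁻¹)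
      (p := a) (fun i _ => by positivity)
      (by simp [Finset.sum_const, Finset.card_univ]; field_simp)
      (fun i _ => le_of_lt (ha i))
    simp only [smul_eq_mul, ← Finset.mul_sum] at key
    -- key : ((n:ℝ)⁻¹ * S) * log ((n:ℝ)⁻¹ * S) ≤ (n:ℝ)⁻¹ * ∑ a i * log (a i)
    have hlog : Real.log ((n:ℝ)⁻¹ * S) = Real.log S - Real.log n := by
      rw [Real.log_mul (by positivity) (ne_of_gt hS), Real.log_inv]; ring
    rw [hlog] at key
    have := mul_le_mul_of_nonneg_left key (le_of_lt hnpos)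
    calc S * (Real.log S - Real.log n) = (n:ℝ) * ((n:ℝ)⁻¹ * S * (Real.log S - Real.log n)) := by
          field_simp
      _ ≤ (n:ℝ) * ((n:ℝ)⁻¹ * ∑ i, a i * Real.log (a i)) := this
      _ = ∑ i, a i * Real.log (a i) := by field_simp
  have hS1 : S ≤ 1 / Real.log n := hsum
  have hmono : -1/S - Real.log S ≤ -1/(1/Real.log n) - Real.log (1/Real.log n) :=
    g_mono hS hS1 (by rw [div_le_one hlognpos]; linarith)
  have heq : -1/(1/Real.log n) - Real.log (1/Real.log n)
      = -Real.log n + Real.log (Real.log n) := by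
    rw [one_div, Real.log_inv, div_eq_mul_inv, inv_inv]; ring
  rw [heq] at hmono
  rw [div_le_iff₀ hS]
  have hlogS : -1 - S * Real.log S ≤ S * (-Real.log n + Real.log (Real.log n)) := by
    have := mul_le_mul_of_nonneg_left hmono (le_of_lt hS)
    calc -1 - S * Real.log S = S * (-1/S - Real.log S) := by field_simp
      _ ≤ S * (-Real.log n + Real.log (Real.log n)) := this
  nlinarith [hjensen]
end

section
/- Let n ≥ 3 be an integer and b_1,...,b_n positive reals each at most 1/n^{n-1}. Setting a_i = -1/ln(b_i), one has Σ_{i=1}^n a_i ≤ 1/ln(n). -/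
lemma lemB (v : ℝ) (hv : 0 ≤ v) : v^2 ≤ (2+v) * (Real.exp (-v) - 1 + v) := by
  rcases le_or_gt v 1 with h8 | h8
  · have habs : |(-v)| ≤ 1 := by rw [abs_neg, abs_of_nonneg hv]; linarith
    have hb := Real.exp_bound habs (n := 5) (by norm_num)
    have hs : ∑ m ∈ Finset.range 5, (-v) ^ m / m.factorial
        = 1 - v + v^2/2 - v^3/6 + v^4/24 := by
      norm_num [Finset.sum_range_succ, Nat.factorial]
      ring
    rw [hs, abs_neg, abs_of_nonneg hv] at hb
    have hlow : 1 - v + v^2/2 - v^3/6 + v^4/24 - v^5/100 ≤ Real.exp (-v) := by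
      have h2 := (abs_sub_le_iff.1 hb).2
      norm_num [Nat.factorial] at h2
      linarith
    have hpoly : v^2 ≤ (2+v) * ((1 - v + v^2/2 - v^3/6 + v^4/24 - v^5/100) - 1 + v) := by
      nlinarith [mul_nonneg (pow_nonneg hv 3) (sub_nonneg.2 h8),
        mul_nonneg (pow_nonneg hv 4) (sub_nonneg.2 h8),
        mul_nonneg (pow_nonneg hv 5) (sub_nonneg.2 h8),
        pow_nonneg hv 3, pow_nonneg hv 4, pow_nonneg hv 5, pow_nonneg hv 6]
    have := mul_le_mul_of_nonneg_left (by linarith [hlow] :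
      (1 - v + v^2/2 - v^3/6 + v^4/24 - v^5/100) - 1 + v ≤ Real.exp (-v) - 1 + v)
      (by linarith : (0:ℝ) ≤ 2 + v)
    linarith
  · rcases le_or_gt v 2 with h2 | h2
    · have h1 : (2 - v) ≤ Real.exp (1 - v) := by
        have := Real.add_one_le_exp (1 - v); linarith
      have h2' : Real.exp (-v) = Real.exp (-1) * Real.exp (1 - v) := by
        rw [← Real.exp_add]; ring_nf
      have hE : Real.exp 1 < 2.7182818286 := Real.exp_one_lt_d9
      have hEi : Real.exp (-1) * Real.exp 1 = 1 := by
        rw [← Real.exp_add]; simp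
      have hEpos : 0 < Real.exp (-1) := Real.exp_pos _
      have hEi2 : 1/2.7182818286 < Real.exp (-1) := by
        rw [div_lt_iff₀ (by norm_num)]
        nlinarith
      have hexp : Real.exp (-1) * (2 - v) ≤ Real.exp (-v) := by
        rw [h2']
        nlinarith
      have hprod : 0 ≤ (2 - v) * (Real.exp (-1) * (2+v) - 1) := by
        apply mul_nonneg (by linarith)
        nlinarith
      nlinarith [mul_le_mul_of_nonneg_left hexp (by linarith : (0:ℝ) ≤ 2 + v)]
    · have := Real.exp_pos (-v)
      nlinarith

lemma lemA (t u : ℝ) (ht : 2 ≤ t) (hs : 2 ≤ t + u) :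
    u^2 ≤ t * (Real.exp u - 1 - u) := by
  rcases le_or_gt 0 u with hu | hu
  · have h3 := Real.sum_le_exp_of_nonneg hu 3
    have he : ∑ i ∈ Finset.range 3, u ^ i / i.factorial = 1 + u + u^2/2 := by
      norm_num [Finset.sum_range_succ, Nat.factorial]
    rw [he] at h3
    nlinarith
  · have hB := lemB (-u) (by linarith)
    have hnn : 0 ≤ Real.exp u - 1 - u := by
      have := Real.add_one_le_exp u; linarith
    have ht' : 2 + (-u) ≤ t := by linarith
    simp only [neg_neg] at hB
    calc u^2 = (-u)^2 := by ring
    _ ≤ (2 + (-u)) * (Real.exp u - 1 + (-u)) := hB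
    _ ≤ t * (Real.exp u - 1 - u) := by
        have h := mul_le_mul_of_nonneg_right ht' (by linarith : (0:ℝ) ≤ Real.exp u - 1 + (-u))
        linarith [h]

set_option maxHeartbeats 1000000 in
theorem sum_inv_neg_log_le (n : ℕ) (hn : 3 ≤ n) (b : Fin n → ℝ)
    (hb : ∀ i, 0 < b i) (hble : ∀ i, b i ≤ 1 / (n : ℝ) ^ (n - 1))
    (hsum : ∑ i, b i ≤ 1 / (n : ℝ) ^ (n - 1)) :
    ∑ i, -1 / Real.log (b i) ≤ 1 / Real.log n := by
  have hn3 : (3:ℝ) ≤ n := by exact_mod_cast hn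
  have hnpos : (0:ℝ) < n := by linarith
  set L := Real.log n with hLdef
  have hL1 : 1 < L := by
    have h3 : (1:ℝ) < Real.log 3 := by
      rw [Real.lt_log_iff_exp_lt (by norm_num)]
      calc Real.exp 1 < 2.7182818286 := Real.exp_one_lt_d9
      _ < 3 := by norm_num
    calc (1:ℝ) < Real.log 3 := h3
    _ ≤ L := Real.log_le_log (by norm_num) hn3
  set s := (n:ℝ) * L with hsdef
  have hs2 : 2 ≤ s := by nlinarith
  have hspos : 0 < s := by linarith
  have hcast : ((n-1 : ℕ) : ℝ) = (n:ℝ) - 1 := by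
    have h1 : 1 ≤ n := by omega
    push_cast [Nat.cast_sub h1]
    ring
  have hpow : ((n:ℝ)) ^ (n-1) = Real.exp (((n:ℝ)-1) * L) := by
    rw [← Real.rpow_natCast (n:ℝ) (n-1), Real.rpow_def_of_pos hnpos, hcast, mul_comm]
  have hexpL : Real.exp L = n := Real.exp_log hnpos
  have hinv : 1/(n:ℝ)^(n-1) = (n:ℝ) * Real.exp (-s) := by
    rw [hpow, one_div, ← Real.exp_neg,
      show -(((n:ℝ)-1)*L) = L + (-s) by rw [hsdef]; ring, Real.exp_add, hexpL]
  have key : ∀ i, -1 / Real.log (b i) ≤ 1/s + Real.exp s / s^2 * (b i - Real.exp (-s)) := by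
    intro i
    set t := -Real.log (b i) with htdef
    have hbl := hble i
    have hbp := hb i
    have hlogb : Real.log (b i) ≤ -(((n:ℝ)-1) * L) := by
      calc Real.log (b i) ≤ Real.log (1/(n:ℝ)^(n-1)) := Real.log_le_log hbp hbl
      _ = -(((n:ℝ)-1)*L) := by rw [one_div, Real.log_inv, hpow, Real.log_exp]
    have ht2 : 2 ≤ t := by
      have : (2:ℝ) ≤ ((n:ℝ)-1) * L := by nlinarith
      rw [htdef]; linarith
    have htpos : 0 < t := by linarith
    have hu := lemA t (s - t) ht2 (by linarith : 2 ≤ t + (s - t))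
    have hebt : Real.exp (-t) = b i := by
      rw [htdef, neg_neg, Real.exp_log hbp]
    have hest : Real.exp (s - t) = Real.exp s * b i := by
      rw [show s - t = s + (-t) by ring, Real.exp_add, hebt]
    have hgoal1 : -1 / Real.log (b i) = 1 / t := by
      rw [show Real.log (b i) = -t by rw [htdef]; ring, div_neg, neg_div, neg_neg]
    rw [hgoal1]
    have hkey2 : 1/t ≤ 1/s + (Real.exp (s-t) - 1)/s^2 := by
      rw [div_add_div _ _ (ne_of_gt hspos) (by positivity), div_le_div_iff₀ htpos (by positivity)]
      nlinarith [mul_le_mul_of_nonneg_left hu hspos.le]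
    have heq : (Real.exp (s-t) - 1)/s^2 = Real.exp s / s^2 * (b i - Real.exp (-s)) := by
      have h1 : Real.exp s * Real.exp (-s) = 1 := by rw [← Real.exp_add]; simp
      have h2 : Real.exp s * (b i - Real.exp (-s)) = Real.exp s * b i - 1 := by
        rw [mul_sub, h1]
      rw [hest, div_mul_eq_mul_div, h2]
    linarith [heq ▸ hkey2]
  calc ∑ i, -1 / Real.log (b i)
      ≤ ∑ i, (1/s + Real.exp s / s^2 * (b i - Real.exp (-s))) :=
        Finset.sum_le_sum (fun i _ => key i)
    _ = (n:ℝ) * (1/s) + Real.exp s / s^2 * ((∑ i, b i) - n * Real.exp (-s)) := by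
        rw [Finset.sum_add_distrib, Finset.sum_const, Finset.card_univ, Fintype.card_fin,
          ← Finset.mul_sum, Finset.sum_sub_distrib, Finset.sum_const, Finset.card_univ,
          Fintype.card_fin]
        push_cast
        ring
    _ ≤ (n:ℝ) * (1/s) := by
        have h1 : (∑ i, b i) - (n:ℝ) * Real.exp (-s) ≤ 0 := by
          rw [← hinv] at *; linarith [hsum]
        have h2 : 0 ≤ Real.exp s / s^2 := by positivity
        nlinarith
    _ = 1 / L := by
        rw [hsdef]
        field_simp
end

section
/- For n > d and arbitrary k ≥ 1, there exist homogeneous polynomials P_1,...,P_n on ℓ_1^d (defined by P_i(z) = z_i^{k(n-d+1)} for i < d and P_i(z) = z_d^k for i ≥ d) such that ‖P_1⋯P_n‖ = d^{-Σ deg(P_i)} ‖P_1‖⋯‖P_n‖, where norms are sup norms over the unit ball of ℓ_1^d. Hence the optimal constant M_n(ℓ_1^d) with ‖P_1‖⋯‖P_n‖ ≤ M_n^{Σ k_i} ‖P_1⋯P_n‖ satisfies M_n(ℓ_1^d) ≥ d. -/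
/-!
Each factor is a power of a single coordinate, so its norm is 1, while the product is
`(z₁ ⋯ z_d) ^ K` with `K = k (n - d + 1)`, of total degree `d K`. By AM-GM its supremum on the
unit ball of `ℓ_1^d` is `d ^ (-d K)`, attained at `(1/d, …, 1/d)`.
-/

/-- The sup norm of a scalar function over the closed unit ball of `ℓ_1^d`. -/
noncomputable def supNormL1 {d : ℕ} (P : PiLp 1 (fun _ : Fin d => ℝ) → ℝ) : ℝ :=
  ⨆ z ∈ Metric.closedBall (0 : PiLp 1 (fun _ : Fin d => ℝ)) 1, |P z|

open Finset

@[to_additive]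
theorem Finset.prod_range_ite_lt {M : Type*} [CommMonoid M] (f : ℕ → M) (c : M) {D n : ℕ}
    (hDn : D ≤ n) :
    ∏ i ∈ range n, (if i < D then f i else c) = (∏ i ∈ range D, f i) * c ^ (n - D) := by
  rw [← prod_range_mul_prod_Ico _ hDn]
  congr 1
  · exact prod_congr rfl fun i hi => if_pos (mem_range.mp hi)
  · rw [prod_congr rfl fun i hi => if_neg (mem_Ico.mp hi).1.not_gt, prod_const, Nat.card_Ico]

theorem Real.prod_le_sum_div_card_pow {ι : Type*} (s : Finset ι) (y : ι → ℝ)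
    (hy : ∀ i ∈ s, 0 ≤ y i) : ∏ i ∈ s, y i ≤ ((∑ i ∈ s, y i) / #s) ^ #s := by
  rcases s.eq_empty_or_nonempty with rfl | hs
  · simp
  have hcard : (0 : ℝ) < #s := by exact_mod_cast hs.card_pos
  have hgeom : ∏ i ∈ s, y i ^ (#s : ℝ)⁻¹ ≤ (∑ i ∈ s, y i) / #s := by
    calc ∏ i ∈ s, y i ^ (#s : ℝ)⁻¹ ≤ ∑ i ∈ s, (#s : ℝ)⁻¹ * y i :=
          Real.geom_mean_le_arith_mean_weighted s _ y (fun _ _ => by positivity)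
            (by simp [hcard.ne']) hy
      _ = (∑ i ∈ s, y i) / #s := by rw [← mul_sum, inv_mul_eq_div]
  calc ∏ i ∈ s, y i = (∏ i ∈ s, y i ^ (#s : ℝ)⁻¹) ^ #s := by
        rw [← prod_pow]
        refine prod_congr rfl fun i hi => ?_
        rw [← Real.rpow_natCast, ← Real.rpow_mul (hy i hi), inv_mul_cancel₀ hcard.ne',
          Real.rpow_one]
    _ ≤ ((∑ i ∈ s, y i) / #s) ^ #s :=
        pow_le_pow_left₀ (prod_nonneg fun i hi => Real.rpow_nonneg (hy i hi) _) hgeom _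

section SupNorm

variable {d : ℕ}

local notation "ℓ₁" => PiLp 1 (fun _ : Fin d => ℝ)

theorem supNormL1_eq_of_forall_le {P : ℓ₁ → ℝ} {c : ℝ}
    (hle : ∀ z ∈ Metric.closedBall (0 : ℓ₁) 1, |P z| ≤ c)
    (z₀ : ℓ₁) (hz₀ : z₀ ∈ Metric.closedBall (0 : ℓ₁) 1) (hc : |P z₀| = c) :
    supNormL1 P = c := by
  have hc0 : 0 ≤ c := hc ▸ abs_nonneg _
  refine le_antisymm (Real.iSup_le (fun z => Real.iSup_le (hle z) hc0) hc0) ?_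
  refine hc ▸ le_ciSup₂ (f := fun z (_ : z ∈ Metric.closedBall (0 : ℓ₁) 1) => |P z|) ?_ z₀ hz₀
  refine ⟨c, ?_⟩
  simp only [mem_upperBounds, Set.mem_iUnion, Set.mem_range]
  rintro _ ⟨z, hz, rfl⟩
  exact hle z hz

theorem sum_abs_le_one_of_mem_closedBall {z : ℓ₁} (hz : z ∈ Metric.closedBall (0 : ℓ₁) 1) :
    ∑ j, |z j| ≤ 1 := by
  simpa [PiLp.norm_eq_of_L1] using hz

theorem supNormL1_coord_pow (j : Fin d) (m : ℕ) : supNormL1 (fun z : ℓ₁ => z j ^ m) = 1 := by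
  refine supNormL1_eq_of_forall_le (fun z hz => ?_) (WithLp.toLp 1 (Pi.single j 1)) ?_ (by simp)
  · rw [abs_pow]
    refine pow_le_one₀ (abs_nonneg _) ((single_le_sum (fun i _ => abs_nonneg (z i))
      (mem_univ j)).trans (sum_abs_le_one_of_mem_closedBall hz))
  · simp

theorem supNormL1_prod_coord_pow (K : ℕ) :
    supNormL1 (fun z : ℓ₁ => ∏ j, z j ^ K) = 1 / (d : ℝ) ^ (d * K) := by
  refine supNormL1_eq_of_forall_le (fun z hz => ?_) (WithLp.toLp 1 fun _ => 1 / (d : ℝ)) ?_ ?_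
  · have hamgm : ∏ j, |z j| ≤ (1 / d) ^ d := by
      refine (Real.prod_le_sum_div_card_pow _ _ fun j _ => abs_nonneg (z j)).trans ?_
      rw [card_univ, Fintype.card_fin]
      gcongr
      exact sum_abs_le_one_of_mem_closedBall hz
    calc |∏ j, z j ^ K| = (∏ j, |z j|) ^ K := by simp only [abs_prod, abs_pow, prod_pow]
      _ ≤ ((1 / d) ^ d) ^ K := by gcongr
      _ = 1 / (d : ℝ) ^ (d * K) := by rw [← pow_mul, one_div_pow]
  · simpa [PiLp.norm_eq_of_L1, ← div_eq_mul_inv] using div_self_le_one (d : ℝ)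
  · simp [← pow_mul, mul_comm K]

end SupNorm

theorem prod_dite_coord_pow_eq_prod_pow {M : Type*} [CommMonoid M] {d n : ℕ} (hd : 1 ≤ d)
    (hdn : d ≤ n) (k : ℕ) (z : Fin d → M) :
    ∏ i : Fin n, (if h : (i : ℕ) < d - 1 then
        z ⟨(i : ℕ), lt_of_lt_of_le h (Nat.sub_le d 1)⟩ ^ (k * (n - d + 1))
      else z ⟨d - 1, Nat.sub_lt hd one_pos⟩ ^ k) = ∏ j, z j ^ (k * (n - d + 1)) := by
  set w : ℕ → M := fun j => if h : j < d then z ⟨j, h⟩ else 1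
  have hw : ∀ j : Fin d, w j = z j := fun j => dif_pos j.isLt
  have hexp : k * (n - d + 1) = k * (n - (d - 1)) := by congr 1; omega
  calc _ = ∏ i ∈ range n, (if i < d - 1 then w i ^ (k * (n - d + 1)) else w (d - 1) ^ k) := by
        rw [← Fin.prod_univ_eq_prod_range]
        refine prod_congr rfl fun i _ => ?_
        split_ifs <;> rw [← hw]
    _ = ∏ j ∈ range d, w j ^ (k * (n - d + 1)) := by
        rw [prod_range_ite_lt _ _ (by omega), ← pow_mul, ← hexp, ← prod_range_succ,
          Nat.sub_add_cancel hd]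
    _ = ∏ j, z j ^ (k * (n - d + 1)) := by
        rw [← Fin.prod_univ_eq_prod_range]
        simp only [hw]

theorem ell1_extremal_polynomials (d n k : ℕ) (hd : 1 ≤ d) (hnd : d < n)
    (hk : 1 ≤ k)
    (P : Fin n → PiLp 1 (fun _ : Fin d => ℝ) → ℝ)
    (deg : Fin n → ℕ)
    (hdeg : ∀ i, deg i = if (i : ℕ) < d - 1 then k * (n - d + 1) else k)
    (hP : ∀ i z, P i z =
      if h : (i : ℕ) < d - 1 then
        z ⟨(i : ℕ), lt_of_lt_of_le h (Nat.sub_le d 1)⟩ ^ (k * (n - d + 1))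
      else
        z ⟨d - 1, Nat.sub_lt hd one_pos⟩ ^ k) :
    supNormL1 (fun z => ∏ i, P i z) =
      (1 / (d : ℝ) ^ (∑ i, deg i)) * ∏ i, supNormL1 (P i) ∧
    ∀ M : ℝ, 0 ≤ M →
      (∏ i, supNormL1 (P i) ≤ M ^ (∑ i, deg i) * supNormL1 (fun z => ∏ i, P i z)) →
      (d : ℝ) ≤ M := by
  set K := k * (n - d + 1)
  have hfactor : ∀ i, supNormL1 (P i) = 1 := by
    intro i
    rw [show P i = _ from funext (hP i)]
    split_ifs <;> exact supNormL1_coord_pow _ _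
  have hprod : (fun z => ∏ i, P i z) = fun z => ∏ j, z j ^ K := by
    funext z
    simp only [hP]
    exact prod_dite_coord_pow_eq_prod_pow hd hnd.le k z
  have hdeg_sum : ∑ i, deg i = d * K := by
    rw [sum_congr rfl fun i _ => hdeg i,
      Fin.sum_univ_eq_sum_range (fun i => if i < d - 1 then K else k),
      sum_range_ite_lt _ _ (by omega), sum_const, card_range, smul_eq_mul, smul_eq_mul,
      show n - (d - 1) = n - d + 1 by omega, mul_comm _ k, ← Nat.succ_mul,
      Nat.succ_eq_add_one, Nat.sub_add_cancel hd]
  rw [hprod, supNormL1_prod_coord_pow, prod_eq_one fun i _ => hfactor i, hdeg_sum, mul_one]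
  refine ⟨rfl, fun M hM hle => ?_⟩
  have hd0 : (0 : ℝ) < d := by exact_mod_cast hd
  have hdK : d * K ≠ 0 := Nat.mul_ne_zero (by omega) (Nat.mul_ne_zero (by omega) (by omega))
  rwa [mul_one_div, ← div_pow, one_le_pow_iff_of_nonneg (by positivity) hdK,
    one_le_div hd0] at hle
end

section
/- Let b_1,...,b_n be positive reals each at most e^{-2}, and define s_i = ln(K)/ln(b_i) for K ∈ (0,1) with Σ_j b_j = n K^n and K ≤ (n e^2)^{-1/n}. Then Σ_{j=1}^n s_j ≤ 1. (Jensen step in Lemma on plank scalars for finite-dimensional case.) -/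
open Real Finset

/-! Jensen's inequality for the function `x ↦ 1 / log x`, convex on `(0, e⁻²]`, at the mean of
the `b i`, which is `K ^ n`, gives `(n log K)⁻¹ ≤ n⁻¹ ∑ (log b_i)⁻¹`; multiplying by the negative
number `n log K` gives the claim. -/

lemma convexOn_inv_log : ConvexOn ℝ (Set.Ioc 0 (exp (-2))) fun x ↦ (log x)⁻¹ := by
  have hlog_lt {x : ℝ} (hx : x ∈ Set.Ioo 0 (exp (-2))) : log x < -2 := by
    simpa using log_lt_log hx.1 hx.2
  refine convexOn_of_hasDerivWithinAt2_nonneg (convex_Ioc _ _)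
    (f' := fun x ↦ -(x * log x ^ 2)⁻¹)
    (f'' := fun x ↦ (log x ^ 2 + 2 * log x) / (x * log x ^ 2) ^ 2) ?_ ?_ ?_ ?_
  · refine ContinuousOn.inv₀ (continuousOn_log.mono fun x hx ↦ hx.1.ne') fun x hx ↦ ?_
    have := log_le_log hx.1 hx.2
    rw [log_exp] at this
    linarith
  all_goals
    rw [interior_Ioc]
    intro x hx
    have hl := hlog_lt hx
    have hx0 : x ≠ 0 := hx.1.ne'
    have hl0 : log x ≠ 0 := by linarith
  · have : HasDerivAt (fun x ↦ (log x)⁻¹) (-(x * log x ^ 2)⁻¹) x :=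
      ((hasDerivAt_log hx0).inv hl0).congr_deriv (by field_simp)
    exact this.hasDerivWithinAt
  · have hu : HasDerivAt (fun x ↦ x * log x ^ 2) (log x ^ 2 + 2 * log x) x :=
      ((hasDerivAt_id x).mul ((hasDerivAt_log hx0).pow 2)).congr_deriv
        (by simp only [Pi.pow_apply, one_mul, id_eq, Nat.cast_ofNat, Nat.add_one_sub_one, pow_one,
          add_right_inj]; field_simp)
    have : HasDerivAt (fun x ↦ -(x * log x ^ 2)⁻¹)
        ((log x ^ 2 + 2 * log x) / (x * log x ^ 2) ^ 2) x :=
      (hu.inv (by positivity)).neg.congr_deriv (by ring)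
    exact this.hasDerivWithinAt
  · exact div_nonneg (by nlinarith) (sq_nonneg _)

lemma inv_log_mean_le_mean_inv_log {ι : Type*} {s : Finset ι} (hs : s.Nonempty) {b : ι → ℝ}
    (hb : ∀ i ∈ s, b i ∈ Set.Ioc 0 (exp (-2))) :
    (log ((∑ i ∈ s, b i) / #s))⁻¹ ≤ (∑ i ∈ s, (log (b i))⁻¹) / #s := by
  have hcard : (0 : ℝ) < #s := by exact_mod_cast hs.card_pos
  simpa [← mul_sum, div_eq_inv_mul] using convexOn_inv_log.map_sum_le
    (w := fun _ ↦ (#s : ℝ)⁻¹) (fun _ _ ↦ by positivity) (by simp [hcard.ne']) hb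

theorem sum_log_ratios_le_one_general (n : ℕ) (hn : 0 < n) (K : ℝ)
    (hK0 : 0 < K) (hK1 : K < 1)
    (b : Fin n → ℝ) (hb : ∀ i, 0 < b i)
    (hble : ∀ i, b i ≤ Real.exp (-2))
    (hsum : ∑ i, b i = n * K ^ n) :
    ∑ i, Real.log K / Real.log (b i) ≤ 1 := by
  have hn' : (0 : ℝ) < n := by exact_mod_cast hn
  have hnlogK : n * log K < 0 := mul_neg_of_pos_of_neg hn' (log_neg hK0 hK1)
  have hjensen := inv_log_mean_le_mean_inv_log (univ_nonempty_iff.2 ⟨⟨0, hn⟩⟩)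
    fun i _ ↦ ⟨hb i, hble i⟩
  rw [hsum, card_univ, Fintype.card_fin, mul_div_cancel_left₀ _ hn'.ne', log_pow] at hjensen
  calc ∑ i, log K / log (b i) = (n * log K) * ((∑ i, (log (b i))⁻¹) / n) := by
        field_simp
        simp [div_eq_mul_inv, mul_sum]
    _ ≤ (n * log K) * (n * log K)⁻¹ := mul_le_mul_of_nonpos_left hjensen hnlogK.le
    _ = 1 := mul_inv_cancel₀ hnlogK.ne

theorem sum_log_ratios_le_one (n : ℕ) (hn : 0 < n) (K : ℝ)
    (hK0 : 0 < K) (hK1 : K < 1)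
    (hK : K ≤ 1 / ((n * Real.exp 1 ^ 2) ^ ((1 : ℝ) / n)))
    (b : Fin n → ℝ) (hb : ∀ i, 0 < b i)
    (hble : ∀ i, b i ≤ Real.exp (-2))
    (hsum : ∑ i, b i = n * K ^ n) :
    ∑ i, Real.log K / Real.log (b i) ≤ 1 :=
  sum_log_ratios_le_one_general n hn K hK0 hK1 b hb hble hsum
end
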